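/- arXiv:2503.19518 — 4 statements merged into one kernel-verified Lean document; each statement's English description precedes it below -/
import Mathlib

section
/- Let a₀(x) = exp(-x)·𝟙_{x≥0}. A bounded C¹ function R : ℝ → ℝ with bounded derivative satisfies R = a₀ * Φ'(R) (convolution on ℝ) if and only if R satisfies the ODE R + R' = Φ'(R) on ℝ. -/
/-!
Multiplying by the integrating factor `exp x`, the ODE says that `u x = exp x * R x` has
derivative `exp x * Φ' (R x)`, while the fixed-point equation says that `u` equals
`H x = ∫_{-∞}^x exp s * Φ' (R s) ds`, whose derivative is the same function. Since `R` and
`Φ' ∘ R` are bounded, both `u` and `H` are `O(exp x)` as `x → -∞`, and two functions with the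
same derivative that agree at `-∞` are equal.
-/

open MeasureTheory Real Set Filter Topology

theorem hasDerivAt_setIntegral_Iic {f : ℝ → ℝ} (hf : Continuous f)
    (hint : ∀ a, IntegrableOn f (Iic a)) (x : ℝ) :
    HasDerivAt (fun y => ∫ s in Iic y, f s) (f x) x := by
  have hsplit : (fun y => ∫ s in Iic y, f s) =
      fun y => (∫ s in Iic 0, f s) + ∫ s in (0 : ℝ)..y, f s := by
    funext y
    rw [← intervalIntegral.integral_Iic_sub_Iic (hint 0) (hint y)]
    ring
  rw [hsplit]
  exact (intervalIntegral.integral_hasDerivAt_right (hf.intervalIntegrable 0 x)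
    (hf.stronglyMeasurableAtFilter volume _) hf.continuousAt).const_add _

theorem eq_of_hasDerivAt_of_tendsto_sub_atBot {u v u' : ℝ → ℝ}
    (hu : ∀ x, HasDerivAt u (u' x) x) (hv : ∀ x, HasDerivAt v (u' x) x)
    (hlim : Tendsto (u - v) atBot (𝓝 0)) : u = v := by
  have hderiv : ∀ x, HasDerivAt (u - v) 0 x := fun x => by simpa using (hu x).sub (hv x)
  have hconst : ∀ x, (u - v) x = (u - v) 0 := fun x =>
    is_const_of_deriv_eq_zero (fun y => (hderiv y).differentiableAt) (fun y => (hderiv y).deriv) x 0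
  have hzero : (u - v) 0 = 0 :=
    tendsto_nhds_unique (tendsto_const_nhds.congr fun x => (hconst x).symm) hlim
  funext x
  exact sub_eq_zero.mp ((hconst x).trans hzero)

theorem tendsto_atBot_zero_of_abs_le_mul_exp {f : ℝ → ℝ} {C : ℝ}
    (hf : ∀ x, |f x| ≤ C * exp x) : Tendsto f atBot (𝓝 0) := by
  have hC : Tendsto (fun x => C * exp x) atBot (𝓝 0) := by
    simpa using tendsto_exp_atBot.const_mul C
  exact squeeze_zero_norm hf hC

theorem eq_exp_neg_mul_iff (x a b : ℝ) : a = exp (-x) * b ↔ exp x * a = b := by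
  rw [exp_neg, eq_inv_mul_iff_mul_eq₀ (exp_ne_zero x)]

theorem integral_expKernel_mul_eq (g : ℝ → ℝ) (x : ℝ) :
    ∫ t, (if 0 ≤ t then exp (-t) else 0) * g (x - t) =
      exp (-x) * ∫ s in Iic x, exp s * g s := by
  rw [← integral_const_mul, ← integral_indicator measurableSet_Iic,
    ← integral_sub_left_eq_self (indicator (Iic x) fun s => exp (-x) * (exp s * g s)) volume x]
  congr 1
  funext t
  by_cases ht : 0 ≤ t
  · rw [if_pos ht, indicator_of_mem (show x - t ∈ Iic x by simpa using ht), ← mul_assoc,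
      ← exp_add]
    ring_nf
  · simp [ht]

section BoundedWeight

variable {g : ℝ → ℝ} {K : ℝ}

theorem integrableOn_Iic_exp_mul_of_abs_le (hgm : AEStronglyMeasurable g) (hg : ∀ s, |g s| ≤ K)
    (x : ℝ) : IntegrableOn (fun s => exp s * g s) (Iic x) :=
  ((integrableOn_exp_Iic x).mul_const K).mono'
    (continuous_exp.aestronglyMeasurable.mul hgm).restrict
    (Eventually.of_forall fun s => by
      simpa [abs_mul] using mul_le_mul_of_nonneg_left (hg s) (exp_pos s).le)

theorem abs_setIntegral_Iic_exp_mul_le (hg : ∀ s, |g s| ≤ K) (x : ℝ) :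
    |∫ s in Iic x, exp s * g s| ≤ K * exp x :=
  calc |∫ s in Iic x, exp s * g s| ≤ ∫ s in Iic x, exp s * K :=
        norm_integral_le_of_norm_le (f := fun s => exp s * g s)
          ((integrableOn_exp_Iic x).mul_const K)
          (Eventually.of_forall fun s => by
            simpa [abs_mul] using mul_le_mul_of_nonneg_left (hg s) (exp_pos s).le)
    _ = K * exp x := by rw [integral_mul_const, integral_exp_Iic, mul_comm]

end BoundedWeight

theorem fixed_point_iff_ODE_general
    (Φ' : ℝ → ℝ) (hΦ' : Continuous Φ')
    (R : ℝ → ℝ) (hR : ContDiff ℝ 1 R)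
    (hRb : ∃ M, ∀ x, |R x| ≤ M) :
    (∀ x : ℝ, R x = ∫ t : ℝ, (if 0 ≤ t then Real.exp (-t) else 0) * Φ' (R (x - t)))
      ↔ (∀ x : ℝ, R x + deriv R x = Φ' (R x)) := by
  obtain ⟨M, hM⟩ := hRb
  obtain ⟨K, hK⟩ : ∃ K, ∀ x, |Φ' (R x)| ≤ K := by
    obtain ⟨C, hC⟩ := (isCompact_Icc (a := -M) (b := M)).exists_bound_of_continuousOn
      hΦ'.continuousOn
    exact ⟨C, fun x => hC (R x) (abs_le.mp (hM x))⟩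
  have hg : Continuous fun x => Φ' (R x) := hΦ'.comp hR.continuous
  set H : ℝ → ℝ := fun x => ∫ s in Iic x, exp s * Φ' (R s)
  have hH : ∀ x, HasDerivAt H (exp x * Φ' (R x)) x := hasDerivAt_setIntegral_Iic
    (continuous_exp.mul hg) (integrableOn_Iic_exp_mul_of_abs_le hg.aestronglyMeasurable hK)
  have hu : ∀ x, HasDerivAt (fun y => exp y * R y) (exp x * (R x + deriv R x)) x := fun x => by
    simpa [mul_add] using (hasDerivAt_exp x).fun_mul (hR.differentiable one_ne_zero x).hasDerivAt
  simp_rw [integral_expKernel_mul_eq fun y => Φ' (R y), eq_exp_neg_mul_iff]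
  constructor
  · intro huH x
    refine mul_left_cancel₀ (exp_ne_zero x) ((hu x).unique ?_)
    rw [funext huH]
    exact hH x
  · intro hode
    refine congrFun (eq_of_hasDerivAt_of_tendsto_sub_atBot (fun x => ?_) hH ?_)
    · simpa [hode x] using hu x
    · have hu0 : Tendsto (fun y => exp y * R y) atBot (𝓝 0) :=
        tendsto_atBot_zero_of_abs_le_mul_exp (C := M) fun x => by
          simpa [abs_mul, mul_comm] using mul_le_mul_of_nonneg_left (hM x) (exp_pos x).le
      have hH0 : Tendsto H atBot (𝓝 0) :=
        tendsto_atBot_zero_of_abs_le_mul_exp (abs_setIntegral_Iic_exp_mul_le hK)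
      have hlim := hu0.sub hH0
      rwa [sub_zero] at hlim

theorem fixed_point_iff_ODE
    (Φ' : ℝ → ℝ) (hΦ' : Continuous Φ')
    (R : ℝ → ℝ) (hR : ContDiff ℝ 1 R)
    (hRb : ∃ M, ∀ x, |R x| ≤ M) (hR'b : ∃ M, ∀ x, |deriv R x| ≤ M) :
    (∀ x : ℝ, R x = ∫ t : ℝ, (if 0 ≤ t then Real.exp (-t) else 0) * Φ' (R (x - t)))
      ↔ (∀ x : ℝ, R x + deriv R x = Φ' (R x)) :=
  fixed_point_iff_ODE_general Φ' hΦ' R hR hRb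
end

section
/- Let μ ∈ ℝ with μ ≠ 1 and define D_ε(z) = εz² - εμ sin²(z) + 2iz sin²(z) for z ∈ ℂ. Then there exists ε₀ > 0 such that for all 0 < ε < ε₀, D_ε has a double zero at z = 0 and exactly one further zero z_ε in the ball B(0, 0.9π), this zero is simple, and z_ε = (iε/2)(1 - μ) + O(ε²) as ε → 0. -/
open Complex Metric

noncomputable def Dsym (μ : ℝ) (ε : ℝ) (z : ℂ) : ℂ :=
  (ε : ℂ) * z ^ 2 - (ε : ℂ) * (μ : ℂ) * Complex.sin z ^ 2
    + 2 * Complex.I * z * Complex.sin z ^ 2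

/-!
Where `sinc z = sin z / z` does not vanish, in particular on `‖z‖ < π`,
`D_ε(z) = 2i sin² z · (z - ε Φ(z))` with `Φ(z) = (i/2)(sinc(z)⁻² - μ)` holomorphic there, so the
zeros of `D_ε` in that disc other than the double zero at `0` are the fixed points of `εΦ`.
On the closed ball of radius `0.9π` the map `Φ` is bounded by some `M` and `K`-Lipschitz, hence for
small `ε` the map `εΦ` is a contraction of that ball with a unique fixed point `z_ε`. It is
nonzero because `Φ(0) = i(1 - μ)/2 ≠ 0`, it satisfies `‖z_ε - εΦ(0)‖ ≤ εK‖z_ε‖ ≤ KMε²`, and it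
is a simple zero because `D_ε'(z_ε) = 2i sin² z_ε · (1 - εΦ'(z_ε))` with `‖εΦ'‖ ≤ εK < 1`.
-/

open scoped NNReal Real Topology

theorem exists_unique_fixedPoint_smul_of_lipschitzOnWith {E : Type*} [NormedAddCommGroup E]
    [NormedSpace ℝ E] [CompleteSpace E] {Φ : E → E} {K : ℝ≥0} {R M ε : ℝ} (hR : 0 ≤ R)
    (hlip : LipschitzOnWith K Φ (closedBall 0 R)) (hM : ∀ z ∈ closedBall 0 R, ‖Φ z‖ ≤ M)
    (hε : 0 ≤ ε) (hεK : ε * K < 1) (hεM : ε * M ≤ R) :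
    ∃ y ∈ closedBall (0 : E) R, ε • Φ y = y ∧
      ∀ z ∈ closedBall (0 : E) R, ε • Φ z = z → z = y := by
  have hmaps : Set.MapsTo (fun z => ε • Φ z) (closedBall 0 R) (closedBall 0 R) := fun z hz => by
    rw [mem_closedBall_zero_iff, norm_smul, Real.norm_of_nonneg hε]
    exact (mul_le_mul_of_nonneg_left (hM z hz) hε).trans hεM
  have hdist : ∀ x ∈ closedBall (0 : E) R, ∀ y ∈ closedBall (0 : E) R,
      dist (ε • Φ x) (ε • Φ y) ≤ ε * K * dist x y := fun x hx y hy => by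
    rw [dist_smul₀, Real.norm_of_nonneg hε, mul_assoc]
    exact mul_le_mul_of_nonneg_left (hlip.dist_le_mul x hx y hy) hε
  have hcontr : ContractingWith (ε.toNNReal * K) (hmaps.restrict _ _ _) := by
    refine ⟨by rwa [← NNReal.coe_lt_coe, NNReal.coe_mul, Real.coe_toNNReal _ hε], ?_⟩
    refine LipschitzWith.of_dist_le_mul fun x y => ?_
    rw [NNReal.coe_mul, Real.coe_toNNReal _ hε]
    exact hdist x x.2 y y.2
  obtain ⟨y, hy, hfix, -⟩ := hcontr.exists_fixedPoint' isClosed_closedBall.isComplete hmaps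
    (mem_closedBall_self hR) (edist_ne_top _ _)
  refine ⟨y, hy, hfix, fun z hz hzfix => dist_le_zero.1 ?_⟩
  have := hdist z hz y hy
  rw [hzfix, hfix.eq] at this
  nlinarith [dist_nonneg (x := z) (y := y)]

theorem DifferentiableOn.exists_lipschitzOnWith_closedBall {E : Type*} [NormedAddCommGroup E]
    [NormedSpace ℂ E] [CompleteSpace E] {f : ℂ → E} {c : ℂ} {R ρ : ℝ}
    (hf : DifferentiableOn ℂ f (ball c ρ)) (hR : R < ρ) :
    ∃ K : ℝ≥0, LipschitzOnWith K f (closedBall c R) := by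
  have hsub : closedBall c R ⊆ ball c ρ := closedBall_subset_ball hR
  obtain ⟨C, hC⟩ := (isCompact_closedBall c R).exists_bound_of_continuousOn
    ((hf.deriv isOpen_ball).continuousOn.mono hsub)
  refine ⟨C.toNNReal, (convex_closedBall c R).lipschitzOnWith_of_nnnorm_deriv_le
    (fun z hz => hf.differentiableAt (isOpen_ball.mem_nhds (hsub hz))) fun z hz => ?_⟩
  rw [← NNReal.coe_le_coe, coe_nnnorm]
  exact (hC z hz).trans (Real.le_coe_toNNReal C)

namespace Complex

noncomputable def sinc : ℂ → ℂ := dslope sin 0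

theorem sinc_zero : sinc 0 = 1 := by
  simp [sinc]

theorem sin_eq_mul_sinc (z : ℂ) : sin z = z * sinc z := by
  simpa [sinc] using (sub_smul_dslope sin 0 z).symm

theorem differentiable_sinc : Differentiable ℂ sinc :=
  differentiableOn_univ.1 <| (differentiableOn_dslope Filter.univ_mem).2
    differentiable_sin.differentiableOn

theorem sinc_ne_zero_of_norm_lt_pi {z : ℂ} (hz : ‖z‖ < π) : sinc z ≠ 0 := by
  intro h
  obtain ⟨k, rfl⟩ := sin_eq_zero_iff.1 (by rw [sin_eq_mul_sinc, h, mul_zero])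
  obtain rfl | hk := eq_or_ne k 0
  · simp [sinc_zero] at h
  · have : (1 : ℝ) ≤ |(k : ℝ)| := by exact_mod_cast Int.one_le_abs hk
    rw [norm_mul, norm_intCast, norm_real, Real.norm_of_nonneg Real.pi_pos.le] at hz
    nlinarith [Real.pi_pos]

theorem hasDerivAt_sin_sq (z : ℂ) : HasDerivAt (fun w => sin w ^ 2) (2 * sin z * cos z) z := by
  simpa [mul_assoc, mul_comm] using (hasDerivAt_sin z).fun_pow 2

end Complex

noncomputable def bifurcationMap (μ : ℝ) (z : ℂ) : ℂ := I / 2 * ((sinc z ^ 2)⁻¹ - μ)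

theorem bifurcationMap_zero (μ : ℝ) : bifurcationMap μ 0 = I / 2 * (1 - μ) := by
  simp [bifurcationMap, sinc_zero]

theorem differentiableOn_bifurcationMap (μ : ℝ) :
    DifferentiableOn ℂ (bifurcationMap μ) (ball 0 π) := fun z hz =>
  ((((differentiable_sinc z).pow 2).inv
    (pow_ne_zero 2 (sinc_ne_zero_of_norm_lt_pi (mem_ball_zero_iff.1 hz)))).sub_const _).const_mul _
    |>.differentiableWithinAt

theorem Dsym_eq_mul_sub {μ ε : ℝ} {z : ℂ} (hz : sinc z ≠ 0) :
    Dsym μ ε z = 2 * I * sin z ^ 2 * (z - ε * bifurcationMap μ z) := by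
  rw [Dsym, bifurcationMap, sin_eq_mul_sinc]
  field_simp
  linear_combination (z ^ 2 * ε - z ^ 2 * ε * μ * sinc z ^ 2) * I_sq

theorem Dsym_eq_zero_iff {μ ε : ℝ} {z : ℂ} (hz₀ : z ≠ 0) (hz : ‖z‖ < π) :
    Dsym μ ε z = 0 ↔ ε * bifurcationMap μ z = z := by
  have hsinc := sinc_ne_zero_of_norm_lt_pi hz
  have hsin : sin z ≠ 0 := by rw [sin_eq_mul_sinc]; exact mul_ne_zero hz₀ hsinc
  rw [Dsym_eq_mul_sub hsinc, eq_comm (b := z)]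
  simp [hsin, I_ne_zero, sub_eq_zero]

theorem hasDerivAt_Dsym_of_fixedPoint {μ ε : ℝ} {z : ℂ} (hz : ‖z‖ < π)
    (hfix : ε * bifurcationMap μ z = z) :
    HasDerivAt (Dsym μ ε) (2 * I * sin z ^ 2 * (1 - ε * deriv (bifurcationMap μ) z)) z := by
  have hnhds : ball (0 : ℂ) π ∈ 𝓝 z := isOpen_ball.mem_nhds (mem_ball_zero_iff.2 hz)
  have hΦ := ((differentiableOn_bifurcationMap μ).differentiableAt hnhds).hasDerivAt
  have hprod := ((hasDerivAt_sin_sq z).const_mul (2 * I)).fun_mul ((hasDerivAt_id' z).fun_sub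
    (hΦ.const_mul (ε : ℂ)))
  have heq : (fun w => 2 * I * sin w ^ 2 * (w - ε * bifurcationMap μ w)) =ᶠ[𝓝 z] Dsym μ ε := by
    filter_upwards [hnhds] with w hw
    exact (Dsym_eq_mul_sub (sinc_ne_zero_of_norm_lt_pi (mem_ball_zero_iff.1 hw))).symm
  exact (hprod.congr_of_eventuallyEq heq.symm).congr_deriv (by simp [hfix])

theorem deriv_Dsym (μ ε : ℝ) :
    deriv (Dsym μ ε) = fun z => 2 * ε * z - 2 * ε * μ * (sin z * cos z) + 2 * I * sin z ^ 2
      + 4 * I * (z * (sin z * cos z)) := by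
  ext z
  refine HasDerivAt.deriv ?_
  convert (((hasDerivAt_pow 2 z).const_mul (ε : ℂ)).sub ((hasDerivAt_sin_sq z).const_mul
    ((ε : ℂ) * μ))).add (((hasDerivAt_id z).const_mul (2 * I)).mul (hasDerivAt_sin_sq z)) using 1
  · ext w; simp [Dsym]
  · simp only [Nat.cast_ofNat, Nat.add_one_sub_one, pow_one, mul_one, id_eq]; ring

theorem deriv_Dsym_zero (μ ε : ℝ) : deriv (Dsym μ ε) 0 = 0 := by
  simp [deriv_Dsym]

theorem iteratedDeriv_two_Dsym_zero (μ ε : ℝ) :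
    iteratedDeriv 2 (Dsym μ ε) 0 = 2 * ε * (1 - μ) := by
  rw [iteratedDeriv_succ, iteratedDeriv_one, deriv_Dsym]
  have hsc := (hasDerivAt_sin (0 : ℂ)).fun_mul (hasDerivAt_cos 0)
  refine HasDerivAt.deriv ?_
  convert ((((hasDerivAt_id (0 : ℂ)).const_mul (2 * (ε : ℂ))).sub
    (hsc.const_mul (2 * (ε : ℂ) * μ))).add ((hasDerivAt_sin_sq 0).const_mul (2 * I))).add
    (((hasDerivAt_id 0).fun_mul hsc).const_mul (4 * I)) using 1
  · ext w; simp
  · simp only [mul_one, cos_zero, sin_zero, neg_zero, mul_zero, add_zero, id_eq]; ring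

theorem exists_Dsym_eq_zero_of_contraction {μ ε R M : ℝ} {K : ℝ≥0} (hμ : μ ≠ 1) (hR : 0 ≤ R)
    (hRπ : R < π) (hlip : LipschitzOnWith K (bifurcationMap μ) (closedBall 0 R))
    (hM : ∀ z ∈ closedBall 0 R, ‖bifurcationMap μ z‖ ≤ M) (hε : 0 < ε) (hεK : ε * K < 1)
    (hεM : ε * M < R) :
    ∃ y ∈ ball (0 : ℂ) R, y ≠ 0 ∧ Dsym μ ε y = 0 ∧ deriv (Dsym μ ε) y ≠ 0 ∧
      (∀ z ∈ ball (0 : ℂ) R, z ≠ 0 → Dsym μ ε z = 0 → z = y) ∧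
      ‖y - I * ε / 2 * (1 - μ)‖ ≤ K * M * ε ^ 2 := by
  obtain ⟨y, hy, hfix, huniq⟩ :=
    exists_unique_fixedPoint_smul_of_lipschitzOnWith hR hlip hM hε.le hεK hεM.le
  have hyM : ‖y‖ ≤ ε * M := by
    rw [← hfix, norm_smul, Real.norm_of_nonneg hε.le]
    exact mul_le_mul_of_nonneg_left (hM y hy) hε.le
  have hyR : y ∈ ball (0 : ℂ) R := mem_ball_zero_iff.2 (hyM.trans_lt hεM)
  rw [real_smul] at hfix
  have hy₀ : y ≠ 0 := by
    rintro rfl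
    have hμC : (1 : ℂ) - μ ≠ 0 := sub_ne_zero.2 (mod_cast hμ.symm)
    simp [bifurcationMap_zero, hε.ne', I_ne_zero, hμC] at hfix
  have hyπ : ‖y‖ < π := (mem_ball_zero_iff.1 hyR).trans hRπ
  have hderiv : ‖(ε : ℂ) * deriv (bifurcationMap μ) y‖ < 1 := by
    rw [norm_mul, norm_real, Real.norm_of_nonneg hε.le]
    have hnhds : closedBall (0 : ℂ) R ∈ 𝓝 y :=
      Filter.mem_of_superset (isOpen_ball.mem_nhds hyR) ball_subset_closedBall
    exact (mul_le_mul_of_nonneg_left (norm_deriv_le_of_lipschitzOn hnhds hlip) hε.le).trans_lt hεK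
  refine ⟨y, hyR, hy₀, (Dsym_eq_zero_iff hy₀ hyπ).2 hfix, ?_, fun z hz hz₀ hDz => ?_, ?_⟩
  · rw [(hasDerivAt_Dsym_of_fixedPoint hyπ hfix).deriv, sin_eq_mul_sinc]
    refine mul_ne_zero (by simp [I_ne_zero, hy₀, sinc_ne_zero_of_norm_lt_pi hyπ]) fun h => ?_
    rw [sub_eq_zero] at h
    simp [← h] at hderiv
  · have hzπ : ‖z‖ < π := (mem_ball_zero_iff.1 hz).trans hRπ
    refine huniq z (ball_subset_closedBall hz) ?_
    rw [real_smul]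
    exact (Dsym_eq_zero_iff hz₀ hzπ).1 hDz
  · have hlin : y - I * ε / 2 * (1 - μ) = ε • (bifurcationMap μ y - bifurcationMap μ 0) := by
      rw [smul_sub, real_smul, real_smul, hfix, bifurcationMap_zero]; ring
    calc ‖y - I * ε / 2 * (1 - μ)‖ = ε * ‖bifurcationMap μ y - bifurcationMap μ 0‖ := by
          rw [hlin, norm_smul, Real.norm_of_nonneg hε.le]
      _ ≤ ε * (K * ‖y - 0‖) := mul_le_mul_of_nonneg_left
          (hlip.norm_sub_le hy (mem_closedBall_self hR)) hε.le
      _ ≤ ε * (K * (ε * M)) := by rw [sub_zero]; gcongr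
      _ = K * M * ε ^ 2 := by ring

theorem denominator_zero_bifurcation (μ : ℝ) (hμ : μ ≠ 1) :
    ∃ ε₀ > (0:ℝ), ∃ (zε : ℝ → ℂ) (C : ℝ),
      ∀ ε : ℝ, 0 < ε → ε < ε₀ →
        -- double zero at the origin
        Dsym μ ε 0 = 0 ∧ deriv (Dsym μ ε) 0 = 0 ∧
        iteratedDeriv 2 (Dsym μ ε) 0 ≠ 0 ∧
        -- a further zero in B(0, 0.9π), which is simple
        zε ε ∈ ball (0 : ℂ) (0.9 * Real.pi) ∧ zε ε ≠ 0 ∧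
        Dsym μ ε (zε ε) = 0 ∧ deriv (Dsym μ ε) (zε ε) ≠ 0 ∧
        -- and it is the only zero besides the origin
        (∀ z ∈ ball (0 : ℂ) (0.9 * Real.pi), z ≠ 0 → Dsym μ ε z = 0 → z = zε ε) ∧
        -- expansion z_ε = (iε/2)(1-μ) + O(ε²)
        ‖zε ε - Complex.I * ε / 2 * (1 - μ)‖ ≤ C * ε ^ 2 := by
  have hR : 0 ≤ 0.9 * π := by positivity
  have hRπ : 0.9 * π < π := by linarith [Real.pi_pos]
  obtain ⟨K, hlip⟩ := (differentiableOn_bifurcationMap μ).exists_lipschitzOnWith_closedBall hRπ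
  obtain ⟨M, hM⟩ := (isCompact_closedBall (0 : ℂ) (0.9 * π)).exists_bound_of_continuousOn
    hlip.continuousOn
  have hM₀ : 0 ≤ M := (norm_nonneg _).trans (hM 0 (mem_closedBall_self hR))
  set ε₀ := min (0.9 * π / (M + 1)) (1 / (K + 1))
  refine ⟨ε₀, by positivity, ?_⟩
  have key : ∀ ε : ℝ, ∃ y : ℂ, 0 < ε → ε < ε₀ →
      y ∈ ball (0 : ℂ) (0.9 * π) ∧ y ≠ 0 ∧ Dsym μ ε y = 0 ∧ deriv (Dsym μ ε) y ≠ 0 ∧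
      (∀ z ∈ ball (0 : ℂ) (0.9 * π), z ≠ 0 → Dsym μ ε z = 0 → z = y) ∧
      ‖y - I * ε / 2 * (1 - μ)‖ ≤ K * M * ε ^ 2 := fun ε => by
    by_cases hε : 0 < ε ∧ ε < ε₀
    · obtain ⟨hε₀, hεR, hεK⟩ := And.intro hε.1 (lt_min_iff.1 hε.2)
      rw [lt_div_iff₀ (by positivity)] at hεR hεK
      obtain ⟨y, hy⟩ := exists_Dsym_eq_zero_of_contraction hμ hR hRπ hlip hM hε₀
        (by nlinarith) (by nlinarith)
      exact ⟨y, fun _ _ => hy⟩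
    · exact ⟨0, fun h₁ h₂ => (hε ⟨h₁, h₂⟩).elim⟩
  choose zε hzε using key
  refine ⟨zε, K * M, fun ε hε hε₀ => ⟨by simp [Dsym], deriv_Dsym_zero μ ε, ?_, hzε ε hε hε₀⟩⟩
  rw [iteratedDeriv_two_Dsym_zero]
  have : (1 : ℂ) - μ ≠ 0 := sub_ne_zero.2 (mod_cast hμ.symm)
  simp [hε.ne', this]
end

section
/- Let μ ∈ ℝ, M > 0. There exist ε₀ > 0 and C > 0 such that for all 0 < ε < ε₀ and all z ∈ ℂ with |Re z| ≥ 0.8π and |Im z| ≤ Mπε, the function A_ε^μ(z) = ε sin²(z)/(εz² - εμ sin²(z) + 2iz sin²(z)) satisfies |A_ε^μ(z)| ≤ Cε/|z|. -/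
/-!
Write `S = sin² z` and factor the denominator as `z (2 i S + ε z) - ε μ S`. Since `|Im z| = O(ε)`,
`sin z` is real up to `O(ε)`, so `Re S ≥ |S| - O(ε²)`. If `|S|` is large compared with `ε²`, the
imaginary part `2 Re S + ε Im z` of `2 i S + ε z` is at least `|S|`; otherwise `|S| ≤ ε / 3` and its
real part `ε Re z - 2 Im S` is at least `|S|` because `|Re z| ≥ 1`. Either way the denominator is
at least `|z| |S| / 2`, whence `|A_ε^μ(z)| ≤ 2 ε / |z|`.
-/

open Complex

theorem Real.abs_sinh_le_two_mul_abs {t : ℝ} (ht : |t| ≤ 1) : |Real.sinh t| ≤ 2 * |t| := by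
  have h₁ := Real.abs_exp_sub_one_le ht
  have h₂ := Real.abs_exp_sub_one_le (x := -t) (by rwa [abs_neg])
  have h₃ := abs_sub (Real.exp t - 1) (Real.exp (-t) - 1)
  rw [abs_neg] at h₂
  rw [sub_sub_sub_cancel_right] at h₃
  rw [Real.sinh_eq, abs_div, abs_two]
  linarith

namespace Complex

theorem sin_im (z : ℂ) : (sin z).im = Real.cos z.re * Real.sinh z.im := by
  conv_lhs => rw [← re_add_im z]
  rw [sin_add_mul_I]
  simp [mul_im, cos_ofReal_re, sinh_ofReal_re]

theorem abs_im_sin_le {z : ℂ} (hz : |z.im| ≤ 1) : |(sin z).im| ≤ 2 * |z.im| := by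
  rw [sin_im, abs_mul]
  calc |Real.cos z.re| * |Real.sinh z.im| ≤ 1 * (2 * |z.im|) :=
        mul_le_mul (Real.abs_cos_le_one _) (Real.abs_sinh_le_two_mul_abs hz) (abs_nonneg _)
          zero_le_one
    _ = 2 * |z.im| := one_mul _

theorem re_sq_eq (w : ℂ) : (w ^ 2).re = ‖w‖ ^ 2 - 2 * w.im ^ 2 := by
  rw [Complex.sq_norm, normSq_apply, pow_two, mul_re]
  ring

section

variable (w z : ℂ) {ε a b : ℝ} (hε : 0 ≤ ε) (hz : 1 ≤ |z.re|) (hw : |w.im| ≤ a)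
  (hzb : |z.im| ≤ b) (hsmall : 3 * (4 * a ^ 2 + ε * b) ≤ ε)
include hε hz hw hzb hsmall

theorem sq_norm_le_norm_two_I_mul_sq_add : ‖w‖ ^ 2 ≤ ‖2 * I * w ^ 2 + ε * z‖ := by
  have hεy : |ε * z.im| ≤ ε * b := by
    rw [abs_mul, abs_of_nonneg hε]; exact mul_le_mul_of_nonneg_left hzb hε
  have hwa : w.im ^ 2 ≤ a ^ 2 := sq_le_sq' (abs_le.mp hw).1 (abs_le.mp hw).2
  rcases le_or_gt (4 * a ^ 2 + ε * b) (‖w‖ ^ 2) with hbig | hsmallw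
  · have him : (2 * I * w ^ 2 + ε * z).im = 2 * (w ^ 2).re + ε * z.im := by
      simp [mul_im, mul_re]
    calc ‖w‖ ^ 2 ≤ |2 * (w ^ 2).re| - |ε * z.im| := by
          rw [re_sq_eq]; linarith [le_abs_self (2 * (‖w‖ ^ 2 - 2 * w.im ^ 2))]
      _ ≤ |(2 * I * w ^ 2 + ε * z).im| := by
          rw [him, ← abs_neg (ε * z.im), ← sub_neg_eq_add]; exact abs_sub_abs_le_abs_sub _ _
      _ ≤ _ := abs_im_le_norm _
  · have hre : (2 * I * w ^ 2 + ε * z).re = ε * z.re - 2 * (w ^ 2).im := by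
      simp [mul_im, mul_re]; ring
    have hS : |(w ^ 2).im| ≤ ‖w‖ ^ 2 := (abs_im_le_norm _).trans (norm_pow w 2).le
    have hεx : ε ≤ |ε * z.re| := by
      rw [abs_mul, abs_of_nonneg hε]; exact le_mul_of_one_le_right hε hz
    calc ‖w‖ ^ 2 ≤ |ε * z.re| - |2 * (w ^ 2).im| := by
          rw [abs_mul 2, abs_two]; linarith
      _ ≤ |(2 * I * w ^ 2 + ε * z).re| := by rw [hre]; exact abs_sub_abs_le_abs_sub _ _
      _ ≤ _ := abs_re_le_norm _

variable {μ : ℝ} (hμ : ε * |μ| ≤ 1 / 2)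
include hμ

theorem norm_mul_sq_norm_div_two_le :
    ‖z‖ * ‖w‖ ^ 2 / 2 ≤ ‖(ε : ℂ) * z ^ 2 - (ε : ℂ) * (μ : ℂ) * w ^ 2 + 2 * I * z * w ^ 2‖ := by
  have hz1 : 1 ≤ ‖z‖ := hz.trans (abs_re_le_norm z)
  have hsplit : (ε : ℂ) * z ^ 2 - (ε : ℂ) * (μ : ℂ) * w ^ 2 + 2 * I * z * w ^ 2
      = z * (2 * I * w ^ 2 + ε * z) - (ε * μ : ℂ) * w ^ 2 := by ring
  have hμw : ‖(ε * μ : ℂ) * w ^ 2‖ = ε * |μ| * ‖w‖ ^ 2 := by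
    rw [norm_mul, norm_pow, ← ofReal_mul, norm_real, Real.norm_eq_abs, abs_mul, abs_of_nonneg hε]
  calc ‖z‖ * ‖w‖ ^ 2 / 2 ≤ ‖z‖ * ‖w‖ ^ 2 - ε * |μ| * ‖w‖ ^ 2 := by
        nlinarith [sq_nonneg ‖w‖]
    _ ≤ ‖z‖ * ‖2 * I * w ^ 2 + ε * z‖ - ‖(ε * μ : ℂ) * w ^ 2‖ := by
        rw [hμw]; gcongr; exact sq_norm_le_norm_two_I_mul_sq_add w z hε hz hw hzb hsmall
    _ ≤ _ := by rw [hsplit, ← norm_mul]; exact norm_sub_norm_le _ _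

theorem norm_symbol_le :
    ‖(ε : ℂ) * w ^ 2 / ((ε : ℂ) * z ^ 2 - (ε : ℂ) * (μ : ℂ) * w ^ 2 + 2 * I * z * w ^ 2)‖
      ≤ 2 * ε / ‖z‖ := by
  have hz0 : 0 < ‖z‖ := one_pos.trans_le (hz.trans (abs_re_le_norm z))
  rw [norm_div, norm_mul, norm_pow, norm_real, Real.norm_eq_abs, abs_of_nonneg hε]
  rcases (norm_nonneg w).eq_or_lt with hw0 | hwpos
  · rw [← hw0, zero_pow two_ne_zero, mul_zero, zero_div]; positivity
  calc _ ≤ ε * ‖w‖ ^ 2 / (‖z‖ * ‖w‖ ^ 2 / 2) := div_le_div_of_nonneg_left (by positivity)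
          (by positivity) (norm_mul_sq_norm_div_two_le w z hε hz hw hzb hsmall hμ)
    _ = 2 * ε / ‖z‖ := by field_simp

end

end Complex

theorem symbol_tail_estimate_general (μ M : ℝ) :
    ∃ ε₀ > (0:ℝ), ∃ C > (0:ℝ), ∀ ε : ℝ, 0 < ε → ε < ε₀ →
      ∀ z : ℂ, 0.8 * Real.pi ≤ |z.re| → |z.im| ≤ M * Real.pi * ε →
        ‖(ε : ℂ) * Complex.sin z ^ 2 /
            ((ε : ℂ) * z ^ 2 - (ε : ℂ) * (μ : ℂ) * Complex.sin z ^ 2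
              + 2 * Complex.I * z * Complex.sin z ^ 2)‖
          ≤ C * ε / ‖z‖ := by
  set P := M * Real.pi
  set K := |μ| + 48 * P ^ 2 + 3 * |P| + 1
  have hK : 0 < K := by positivity
  refine ⟨1 / (2 * K), by positivity, 2, two_pos, fun ε hε hεK z hre him => ?_⟩
  have hεK : ε * K < 1 / 2 := by rw [lt_div_iff₀ (by positivity)] at hεK; linarith
  have hεP : |P| * ε ≤ 1 := by nlinarith [abs_nonneg μ, sq_nonneg P]
  have him1 : |z.im| ≤ 1 :=
    him.trans ((mul_le_mul_of_nonneg_right (le_abs_self P) hε.le).trans hεP)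
  have hre1 : 1 ≤ |z.re| := (by linarith [Real.pi_gt_three] : (1 : ℝ) ≤ 0.8 * Real.pi).trans hre
  have hsin : |(sin z).im| ≤ 2 * (P * ε) :=
    (abs_im_sin_le him1).trans (mul_le_mul_of_nonneg_left him two_pos.le)
  have hsmall : 3 * (4 * (2 * (P * ε)) ^ 2 + ε * (P * ε)) ≤ ε :=
    calc _ ≤ ε * (ε * K) := by
          nlinarith [mul_nonneg (sq_nonneg ε) (abs_nonneg μ),
            mul_le_mul_of_nonneg_left (le_abs_self P) (sq_nonneg ε)]
      _ ≤ ε := mul_le_of_le_one_right hε.le (by linarith)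
  exact norm_symbol_le _ z hε.le hre1 hsin him hsmall (by nlinarith [abs_nonneg P, sq_nonneg P])

theorem symbol_tail_estimate (μ M : ℝ) (hM : 0 < M) :
    ∃ ε₀ > (0:ℝ), ∃ C > (0:ℝ), ∀ ε : ℝ, 0 < ε → ε < ε₀ →
      ∀ z : ℂ, 0.8 * Real.pi ≤ |z.re| → |z.im| ≤ M * Real.pi * ε →
        ‖(ε : ℂ) * Complex.sin z ^ 2 /
            ((ε : ℂ) * z ^ 2 - (ε : ℂ) * (μ : ℂ) * Complex.sin z ^ 2
              + 2 * Complex.I * z * Complex.sin z ^ 2)‖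
          ≤ C * ε / ‖z‖ :=
  symbol_tail_estimate_general μ M
end

section
/- Let μ₊ > 0, ν > 0, and let S : [0,∞) → ℝ be C¹ satisfying μ₊ S(x) + S'(x) = ν Q(x) S(x) + F(x), where Q is continuous, nonnegative, with 0 ≤ ∫_0^x Q(s) ds ≤ C_P for all x > 0, and ∫_0^∞ |F(y)|² exp(2(μ₊ + δ)y) dy ≤ ρ² for some δ > 0, ρ ≥ 0. If S(0) > ρ/√(2δ), then S(x) > 0 for all x ≥ 0 and S(x)·exp(μ₊x) ≥ S(0) - ρ/√(2δ) for all x ≥ 0. -/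
open MeasureTheory Real Set intervalIntegral

/-!
With `A x = ν ∫₀ˣ Q - μp x`, the integrating factor turns the equation into
`(S e^{-A})' = F e^{-A}`, so `S x e^{-A x} = S 0 + ∫₀ˣ F e^{-A}`. Since `Q ≥ 0`, `|F e^{-A}|` is
dominated by `|F y| e^{μp y} = (|F y| e^{(μp+δ) y}) · e^{-δ y}`, whose integral over `[0, ∞)` is at
most `ρ / √(2δ)` by Cauchy–Schwarz. Hence `S x e^{-A x} ≥ S 0 - ρ / √(2δ) > 0`, and multiplying by
`e^{ν ∫₀ˣ Q} ≥ 1` gives the bound on `S x e^{μp x}`.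
-/

theorem integral_mul_le_sqrt_mul_sqrt {α : Type*} [MeasurableSpace α] {m : Measure α}
    {f g : α → ℝ} (hf₀ : 0 ≤ᵐ[m] f) (hg₀ : 0 ≤ᵐ[m] g) (hf : MemLp f 2 m) (hg : MemLp g 2 m) :
    ∫ a, f a * g a ∂m ≤ √(∫ a, f a ^ 2 ∂m) * √(∫ a, g a ^ 2 ∂m) := by
  have h := integral_mul_le_Lp_mul_Lq_of_nonneg Real.HolderConjugate.two_two hf₀ hg₀
    (by simpa using hf) (by simpa using hg)
  simpa only [Real.sqrt_eq_rpow, ← one_div, Real.rpow_two] using h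

theorem aestronglyMeasurable_of_hasDerivAt {m : Measure ℝ} {f f' : ℝ → ℝ} {s : Set ℝ}
    (hs : MeasurableSet s) (hf : ∀ x ∈ s, HasDerivAt f (f' x) x) :
    AEStronglyMeasurable f' (m.restrict s) :=
  (aestronglyMeasurable_deriv f _).congr <| (ae_restrict_mem hs).mono fun x hx => (hf x hx).deriv

theorem aestronglyMeasurable_of_hasDerivAt_mul_add {m : Measure ℝ} {S a F : ℝ → ℝ} {s : Set ℝ}
    (hs : MeasurableSet s) (ha : AEStronglyMeasurable a (m.restrict s))
    (hS : ∀ x ∈ s, HasDerivAt S (a x * S x + F x) x) :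
    AEStronglyMeasurable F (m.restrict s) := by
  have hSm : AEStronglyMeasurable S (m.restrict s) :=
    ContinuousOn.aestronglyMeasurable (fun x hx => (hS x hx).continuousAt.continuousWithinAt) hs
  refine ((aestronglyMeasurable_of_hasDerivAt hs hS).sub (ha.mul hSm)).congr
    (ae_of_all _ fun y => ?_)
  simp only [Pi.sub_apply, Pi.mul_apply]
  ring

theorem hasDerivAt_mul_exp_neg {S A a F : ℝ → ℝ} {x : ℝ}
    (hS : HasDerivAt S (a x * S x + F x) x) (hA : HasDerivAt A (a x) x) :
    HasDerivAt (fun y => S y * exp (-A y)) (F x * exp (-A x)) x :=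
  (hS.mul hA.neg.exp).congr_deriv (by simp only [Pi.neg_apply]; ring)

theorem mul_exp_neg_eq_add_integral {S A a F : ℝ → ℝ} {x₀ x : ℝ} (hx : x₀ ≤ x)
    (hS : ∀ y ∈ Icc x₀ x, HasDerivAt S (a y * S y + F y) y)
    (hA : ∀ y ∈ Icc x₀ x, HasDerivAt A (a y) y)
    (hint : IntervalIntegrable (fun y => F y * exp (-A y)) volume x₀ x) :
    S x * exp (-A x) = S x₀ * exp (-A x₀) + ∫ y in x₀..x, F y * exp (-A y) := by
  rw [integral_eq_sub_of_hasDerivAt (f := fun y => S y * exp (-A y)) (fun y hy => ?_) hint]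
  · ring
  · rw [uIcc_of_le hx] at hy
    exact hasDerivAt_mul_exp_neg (hS y hy) (hA y hy)

theorem intervalIntegrable_and_abs_integral_le {g w : ℝ → ℝ} {a b : ℝ} (hab : a ≤ b)
    (hg : AEStronglyMeasurable g (volume.restrict (Ici a))) (hw : IntegrableOn w (Ici a))
    (hgw : ∀ y ∈ Ici a, |g y| ≤ w y) :
    IntervalIntegrable g volume a b ∧ |∫ y in a..b, g y| ≤ ∫ y in Ici a, w y := by
  have hg_int : IntegrableOn g (Ici a) :=
    hw.mono' hg ((ae_restrict_mem measurableSet_Ici).mono fun y hy => hgw y hy)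
  have hIoc : Ioc a b ⊆ Ici a := fun y hy => mem_Ici.mpr hy.1.le
  refine ⟨(intervalIntegrable_iff_integrableOn_Ioc_of_le hab).mpr (hg_int.mono_set hIoc), ?_⟩
  rw [integral_of_le hab]
  calc |∫ y in Ioc a b, g y| ≤ ∫ y in Ioc a b, |g y| := abs_integral_le_integral_abs
    _ ≤ ∫ y in Ioc a b, w y :=
        setIntegral_mono_on (hg_int.mono_set hIoc).abs (hw.mono_set hIoc) measurableSet_Ioc
          fun y hy => hgw y (hIoc hy)
    _ ≤ ∫ y in Ici a, w y :=
        setIntegral_mono_set hw ((ae_restrict_mem measurableSet_Ici).mono fun y hy =>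
          (abs_nonneg _).trans (hgw y hy)) hIoc.eventuallyLE

section WeightedL2

variable {c δ : ℝ} {F : ℝ → ℝ}

theorem exp_neg_mul_sq (y : ℝ) : exp (-δ * y) ^ 2 = exp (-(2 * δ) * y) := by
  rw [← exp_nat_mul]
  ring_nf

theorem integral_exp_neg_mul_sq_Ici (hδ : 0 < δ) :
    ∫ y in Ici (0:ℝ), exp (-δ * y) ^ 2 = 1 / (2 * δ) := by
  simp_rw [exp_neg_mul_sq, integral_Ici_eq_integral_Ioi,
    integral_exp_mul_Ioi (by linarith : -(2 * δ) < 0)]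
  field_simp
  simp

theorem memLp_two_exp_neg_mul_Ici (hδ : 0 < δ) :
    MemLp (fun y => exp (-δ * y)) 2 (volume.restrict (Ici 0)) := by
  refine (memLp_two_iff_integrable_sq (by fun_prop)).2 ?_
  simp_rw [exp_neg_mul_sq]
  exact (integrableOn_Ici_iff_integrableOn_Ioi).mpr (integrableOn_exp_mul_Ioi (by linarith) 0)

theorem memLp_two_abs_mul_exp_Ici (hF : AEStronglyMeasurable F (volume.restrict (Ici 0)))
    (hFint : IntegrableOn (fun y => F y ^ 2 * exp (2 * (c + δ) * y)) (Ici 0)) :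
    MemLp (fun y => |F y| * exp ((c + δ) * y)) 2 (volume.restrict (Ici 0)) := by
  refine (memLp_two_iff_integrable_sq (hF.norm.mul (by fun_prop))).2
    (hFint.congr_fun (fun y _ => ?_) measurableSet_Ici)
  simp only [Pi.mul_apply, Real.norm_eq_abs, mul_pow, sq_abs, ← exp_nat_mul]
  ring_nf

theorem abs_mul_exp_eq (y : ℝ) :
    |F y| * exp (c * y) = |F y| * exp ((c + δ) * y) * exp (-δ * y) := by
  rw [mul_assoc, ← exp_add]
  ring_nf

variable (hδ : 0 < δ) (hF : AEStronglyMeasurable F (volume.restrict (Ici 0)))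
  (hFint : IntegrableOn (fun y => F y ^ 2 * exp (2 * (c + δ) * y)) (Ici 0))
include hδ hF hFint

theorem integrableOn_abs_mul_exp_Ici : IntegrableOn (fun y => |F y| * exp (c * y)) (Ici 0) := by
  rw [funext (abs_mul_exp_eq (δ := δ))]
  exact (memLp_two_abs_mul_exp_Ici hF hFint).integrable_mul (memLp_two_exp_neg_mul_Ici hδ)

theorem setIntegral_abs_mul_exp_Ici_le {ρ : ℝ} (hρ : 0 ≤ ρ)
    (hFbound : ∫ y in Ici (0:ℝ), F y ^ 2 * exp (2 * (c + δ) * y) ≤ ρ ^ 2) :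
    ∫ y in Ici (0:ℝ), |F y| * exp (c * y) ≤ ρ / √(2 * δ) := by
  rw [funext (abs_mul_exp_eq (δ := δ))]
  have hsq : ∫ y in Ici (0:ℝ), (|F y| * exp ((c + δ) * y)) ^ 2 ≤ ρ ^ 2 := by
    simpa only [mul_pow, sq_abs, ← exp_nat_mul, Nat.cast_ofNat, ← mul_assoc] using hFbound
  calc _ ≤ √(∫ y in Ici (0:ℝ), (|F y| * exp ((c + δ) * y)) ^ 2) *
        √(∫ y in Ici (0:ℝ), exp (-δ * y) ^ 2) :=
        integral_mul_le_sqrt_mul_sqrt (ae_of_all _ fun y => by positivity)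
          (ae_of_all _ fun y => by positivity) (memLp_two_abs_mul_exp_Ici hF hFint)
          (memLp_two_exp_neg_mul_Ici hδ)
    _ ≤ ρ * √(1 / (2 * δ)) := by
        rw [integral_exp_neg_mul_sq_Ici hδ]
        gcongr
        exact Real.sqrt_le_iff.mpr ⟨hρ, hsq⟩
    _ = ρ / √(2 * δ) := by rw [sqrt_div' _ (by positivity), sqrt_one, mul_one_div]

end WeightedL2

theorem lower_bound_positivity_of_wave_derivative_general
    (μp ν δ ρ : ℝ) (hν : 0 < ν) (hδ : 0 < δ) (hρ : 0 ≤ ρ)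
    (S Q F : ℝ → ℝ)
    (hS : ∀ x ∈ Ici (0:ℝ), HasDerivAt S (ν * Q x * S x + F x - μp * S x) x)
    (hQc : Continuous Q) (hQ0 : ∀ x, 0 ≤ Q x)
    (hFint : IntegrableOn (fun y => F y ^ 2 * Real.exp (2 * (μp + δ) * y)) (Ici 0))
    (hFbound : ∫ y in Ici (0:ℝ), F y ^ 2 * Real.exp (2 * (μp + δ) * y) ≤ ρ ^ 2)
    (hS0 : ρ / Real.sqrt (2 * δ) < S 0) :
    ∀ x ∈ Ici (0:ℝ),
      0 < S x ∧ S 0 - ρ / Real.sqrt (2 * δ) ≤ S x * Real.exp (μp * x) := by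
  set P : ℝ → ℝ := fun x => ∫ s in (0:ℝ)..x, Q s
  have hP_nonneg : ∀ x ∈ Ici (0:ℝ), 0 ≤ ν * P x := fun x hx =>
    mul_nonneg hν.le (integral_nonneg hx fun y _ => hQ0 y)
  set A : ℝ → ℝ := fun x => ν * P x - μp * x
  have hA : ∀ x, HasDerivAt A (ν * Q x - μp) x := fun x =>
    (((hQc.integral_hasStrictDerivAt 0 x).hasDerivAt.const_mul ν).sub
      ((hasDerivAt_id x).const_mul μp)).congr_deriv (by simp)
  have hS' : ∀ x ∈ Ici (0:ℝ), HasDerivAt S ((ν * Q x - μp) * S x + F x) x := fun x hx =>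
    (hS x hx).congr_deriv (by ring)
  have hF : AEStronglyMeasurable F (volume.restrict (Ici 0)) :=
    aestronglyMeasurable_of_hasDerivAt_mul_add measurableSet_Ici (by fun_prop) hS'
  intro x hx
  obtain ⟨hint, hbound⟩ := intervalIntegrable_and_abs_integral_le hx
    (g := fun y => F y * exp (-A y)) (hF.mul (by fun_prop))
    (integrableOn_abs_mul_exp_Ici hδ hF hFint) fun y hy => by
      rw [abs_mul, abs_exp]
      gcongr
      linarith [hP_nonneg y hy]
  have hduhamel := mul_exp_neg_eq_add_integral hx (fun y hy => hS' y hy.1) (fun y _ => hA y) hint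
  have hlower : S 0 - ρ / √(2 * δ) ≤ S x * exp (-A x) := by
    have := setIntegral_abs_mul_exp_Ici_le hδ hF hFint hρ hFbound
    simp only [A, P, integral_same, mul_zero, sub_self, neg_zero, exp_zero, mul_one] at hduhamel
    linarith [neg_abs_le (∫ y in (0:ℝ)..x, F y * exp (-A y))]
  have hpos : 0 < S x * exp (-A x) := by linarith
  refine ⟨pos_of_mul_pos_left hpos (exp_pos _).le, ?_⟩
  calc S 0 - ρ / √(2 * δ) ≤ S x * exp (-A x) := hlower
    _ ≤ S x * exp (-A x) * exp (ν * P x) :=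
        le_mul_of_one_le_right hpos.le (one_le_exp (hP_nonneg x hx))
    _ = S x * exp (μp * x) := by
        rw [mul_assoc, ← exp_add]
        simp only [A]
        ring_nf

theorem lower_bound_positivity_of_wave_derivative
    (μp ν δ ρ CP : ℝ) (hμp : 0 < μp) (hν : 0 < ν) (hδ : 0 < δ) (hρ : 0 ≤ ρ)
    (S Q F : ℝ → ℝ)
    (hS : ∀ x ∈ Ici (0:ℝ), HasDerivAt S (ν * Q x * S x + F x - μp * S x) x)
    (hQc : Continuous Q) (hQ0 : ∀ x, 0 ≤ Q x)
    (hQint : ∀ x > (0:ℝ), ∫ s in (0:ℝ)..x, Q s ≤ CP)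
    (hFint : IntegrableOn (fun y => F y ^ 2 * Real.exp (2 * (μp + δ) * y)) (Ici 0))
    (hFbound : ∫ y in Ici (0:ℝ), F y ^ 2 * Real.exp (2 * (μp + δ) * y) ≤ ρ ^ 2)
    (hS0 : ρ / Real.sqrt (2 * δ) < S 0) :
    ∀ x ∈ Ici (0:ℝ),
      0 < S x ∧ S 0 - ρ / Real.sqrt (2 * δ) ≤ S x * Real.exp (μp * x) :=
  lower_bound_positivity_of_wave_derivative_general μp ν δ ρ hν hδ hρ S Q F hS hQc hQ0 hFint hFbound
    hS0
end
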